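/- arXiv:2101.04703 — 5 statements merged into one kernel-verified Lean document; each statement's English description precedes it below -/
import Mathlib

section
/- Let G be a connected graph and let P: v_1, v_2, ..., v_{d+1} be a shortest path in G whose length d equals the diameter of G. Then for every i with 2 ≤ i ≤ d, if every vertex of G not on P is simplicial (its neighborhood induces a complete graph), then v_{i-1} and v_{i+1} lie in different connected components of G − v_i. -/
open SimpleGraph

/-! Take a shortest walk from `v_{i-1}` to `v_{i+1}` in `G − v_i`. A simplicial interior vertex
of a shortest walk could be bypassed, so every vertex of the walk lies on `P`. Along `P` distances
are differences of indices, so consecutive vertices of the walk have indices differing by at most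
one, and the walk would have to pass through index `i`, that is, through `v_i` itself. -/

def completeNeighborhood {V : Type} (G : SimpleGraph V) (v : V) : SimpleGraph V where
  Adj u w := G.Adj u w ∨ (u ≠ w ∧ G.Adj v u ∧ G.Adj v w)
  symm := by
    constructor
    intro a b h
    rcases h with h | ⟨h1, h2, h3⟩
    · exact Or.inl h.symm
    · exact Or.inr ⟨h1.symm, h3, h2⟩
  loopless := by
    constructor
    intro a h
    rcases h with h | ⟨h, -⟩
    · exact G.irrefl h
    · exact h rfl

abbrev deleteVert {V : Type} (G : SimpleGraph V) (x : V) :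
    SimpleGraph ({x}ᶜ : Set V) :=
  G.induce ({x}ᶜ : Set V)

def IsSimplicial {V : Type} (G : SimpleGraph V) (v : V) : Prop :=
  G.IsClique (G.neighborSet v)

noncomputable def fval {V : Type} (G : SimpleGraph V) : ℕ :=
  {v | IsSimplicial G v}.ncard

noncomputable def ivval {V : Type} (G : SimpleGraph V) : ℕ :=
  {v | ¬ IsSimplicial G v}.ncard

noncomputable def dval {V : Type} (G : SimpleGraph V) : ℕ :=
  {v | ∀ u, ¬ G.Adj v u}.ncard +
    ∑ᶠ c : G.ConnectedComponent, (G.induce c.supp).diam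

lemma IsSimplicial.induce {V : Type} {G : SimpleGraph V} {s : Set V} {x : V}
    (hx : IsSimplicial G x) (hxs : x ∈ s) : IsSimplicial (G.induce s) ⟨x, hxs⟩ :=
  fun _ ha _ hb hab => hx ha hb (Subtype.coe_injective.ne hab)

namespace SimpleGraph

variable {V : Type} {G : SimpleGraph V}

namespace Walk

lemma dist_getVert_of_length_eq_dist {u v : V} (w : G.Walk u v) (hw : w.length = G.dist u v)
    {t : ℕ} (ht : t ≤ w.length) : G.dist u (w.getVert t) = t := by
  rw [← length_eq_dist_of_subwalk hw (w.isSubwalk_take t), take_length]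
  omega

lemma not_isSimplicial_of_length_eq_dist {u v x : V} (w : G.Walk u v)
    (hw : w.length = G.dist u v) (hx : x ∈ w.support) (hxu : x ≠ u) (hxv : x ≠ v) :
    ¬ IsSimplicial G x := by
  intro hsimp
  obtain ⟨t, rfl, ht⟩ := mem_support_iff_exists_getVert.mp hx
  have ht0 : t ≠ 0 := by rintro rfl; exact hxu w.getVert_zero
  have htl : t ≠ w.length := by rintro rfl; exact hxv w.getVert_length
  have hprev : G.Adj (w.getVert t) (w.getVert (t - 1)) := by
    simpa [Nat.sub_add_cancel (Nat.one_le_iff_ne_zero.mpr ht0)] using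
      (w.adj_getVert_succ (i := t - 1) (by omega)).symm
  have hnext : G.Adj (w.getVert t) (w.getVert (t + 1)) := w.adj_getVert_succ (by omega)
  have hdist_prev := w.dist_getVert_of_length_eq_dist hw (t := t - 1) (by omega)
  have hdist_next := w.dist_getVert_of_length_eq_dist hw (t := t + 1) (by omega)
  have hshort : G.dist (w.getVert (t - 1)) (w.getVert (t + 1)) ≤ 1 := by
    by_cases hne : w.getVert (t - 1) = w.getVert (t + 1)
    · simp [hne]
    · exact (dist_eq_one_iff_adj.mpr (hsimp hprev hnext hne)).le
  have := (w.take (t - 1)).reachable.dist_triangle_left (w.getVert (t + 1))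
  omega

end Walk

section Geodesic

variable {p : ℕ → V} {d : ℕ}

lemma reachable_and_dist_le_sub_of_adj_succ (hadj : ∀ i < d, G.Adj (p i) (p (i + 1)))
    {a b : ℕ} (hab : a ≤ b) (hb : b ≤ d) :
    G.Reachable (p a) (p b) ∧ G.dist (p a) (p b) ≤ b - a := by
  induction b, hab using Nat.le_induction with
  | base => simp
  | succ b hab ih =>
    obtain ⟨hr, hle⟩ := ih (by omega)
    have hstep := hadj b (by omega)
    refine ⟨hr.trans hstep.reachable, ?_⟩
    have := hr.dist_triangle_left (p (b + 1))
    rw [dist_eq_one_iff_adj.mpr hstep] at this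
    omega

lemma dist_eq_sub_of_adj_succ (hadj : ∀ i < d, G.Adj (p i) (p (i + 1)))
    (hdist : G.dist (p 0) (p d) = d) {a b : ℕ} (hab : a ≤ b) (hb : b ≤ d) :
    G.dist (p a) (p b) = b - a := by
  obtain ⟨hr0a, h0a⟩ :=
    reachable_and_dist_le_sub_of_adj_succ hadj (Nat.zero_le a) (hab.trans hb)
  obtain ⟨hrab, hab'⟩ := reachable_and_dist_le_sub_of_adj_succ hadj hab hb
  have hbd := (reachable_and_dist_le_sub_of_adj_succ hadj hb le_rfl).2
  have t1 := hr0a.dist_triangle_left (p d)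
  have t2 := hrab.dist_triangle_left (p d)
  omega

lemma le_succ_of_adj_of_adj_succ (hadj : ∀ i < d, G.Adj (p i) (p (i + 1)))
    (hdist : G.dist (p 0) (p d) = d) {a c : ℕ} (hc : c ≤ d)
    (h : G.Adj (p a) (p c)) : c ≤ a + 1 := by
  rcases le_total a c with hac | hca
  · have := dist_eq_sub_of_adj_succ hadj hdist hac hc
    rw [dist_eq_one_iff_adj.mpr h] at this
    omega
  · omega

lemma apply_mem_support_of_support_on_geodesic (hadj : ∀ i < d, G.Adj (p i) (p (i + 1)))
    (hdist : G.dist (p 0) (p d) = d) {u v : V} (w : G.Walk u v)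
    (hw : ∀ x ∈ w.support, ∃ i ≤ d, x = p i) {a b j : ℕ} (hu : u = p a) (hv : v = p b)
    (haj : a < j) (hjb : j ≤ b) (hb : b ≤ d) : p j ∈ w.support := by
  induction w generalizing a with
  | nil =>
    subst hu
    have := dist_eq_sub_of_adj_succ hadj hdist (haj.le.trans hjb) hb
    rw [hv, dist_self] at this
    omega
  | @cons _ x _ h w ih =>
    subst hu
    obtain ⟨c, hc, rfl⟩ := hw x (by simp)
    have hca := le_succ_of_adj_of_adj_succ hadj hdist hc h
    by_cases hcj : c = j
    · exact List.mem_cons_of_mem _ (hcj ▸ w.start_mem_support)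
    · exact List.mem_cons_of_mem _
        (ih (fun y hy => hw y (List.mem_cons_of_mem _ hy)) rfl hv (by omega))

end Geodesic

end SimpleGraph

/-- The path `v_1, …, v_{d+1}` is `p 0, …, p d`, so the paper's `v_i` is `p j`, `j = i - 1`. -/
theorem stmt0_general {V : Type} (G : SimpleGraph V)
    (d : ℕ)
    (p : ℕ → V)
    (hadj : ∀ i < d, G.Adj (p i) (p (i + 1)))
    (hdist : G.dist (p 0) (p d) = d)
    (hsimp : ∀ x : V, (∀ i ≤ d, x ≠ p i) → IsSimplicial G x)
    (j : ℕ) (hj1 : 1 ≤ j) (hj2 : j + 1 ≤ d)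
    (h1 : p (j - 1) ∈ ({p j}ᶜ : Set V)) (h2 : p (j + 1) ∈ ({p j}ᶜ : Set V)) :
    ¬ (deleteVert G (p j)).Reachable ⟨p (j - 1), h1⟩ ⟨p (j + 1), h2⟩ := by
  intro hreach
  obtain ⟨w, hw⟩ := hreach.exists_walk_length_eq_dist
  by_cases hP : ∀ x ∈ w.support, ∃ i ≤ d, (x : V) = p i
  · have hPG : ∀ y ∈ (w.map (Embedding.induce _).toHom).support, ∃ i ≤ d, y = p i := by
      intro y hy
      rw [Walk.support_map, List.mem_map] at hy
      obtain ⟨x, hx, rfl⟩ := hy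
      exact hP x hx
    have hmem := apply_mem_support_of_support_on_geodesic hadj hdist _ hPG
      (a := j - 1) (b := j + 1) (j := j) rfl rfl (by omega) (by omega) hj2
    rw [Walk.support_map, List.mem_map] at hmem
    obtain ⟨x, -, hx⟩ := hmem
    exact x.2 hx
  · push Not at hP
    obtain ⟨x, hx, hxP⟩ := hP
    refine w.not_isSimplicial_of_length_eq_dist hw hx ?_ ?_ ((hsimp x hxP).induce x.2)
    · rintro rfl
      exact hxP (j - 1) (by omega) rfl
    · rintro rfl
      exact hxP (j + 1) hj2 rfl

/-- if `P : v_1, …, v_{d+1}` (here `p 0, …, p d`) is a shortest path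
realizing the diameter `d` of a connected graph `G`, and every vertex of `G` not on
`P` is simplicial, then for `1 ≤ j ≤ d - 1` the vertices `p (j-1)` and `p (j+1)` lie
in different connected components of `G - p j`. -/
theorem stmt0 {V : Type} [Fintype V] [DecidableEq V] (G : SimpleGraph V)
    (hconn : G.Connected) (d : ℕ) (hdiam : G.diam = d)
    (p : ℕ → V)
    (hadj : ∀ i < d, G.Adj (p i) (p (i + 1)))
    (hinj : ∀ i ≤ d, ∀ j ≤ d, p i = p j → i = j)
    (hdist : G.dist (p 0) (p d) = d)
    (hsimp : ∀ x : V, (∀ i ≤ d, x ≠ p i) → IsSimplicial G x)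
    (j : ℕ) (hj1 : 1 ≤ j) (hj2 : j + 1 ≤ d)
    (h1 : p (j - 1) ∈ ({p j}ᶜ : Set V)) (h2 : p (j + 1) ∈ ({p j}ᶜ : Set V)) :
    ¬ (deleteVert G (p j)).Reachable ⟨p (j - 1), h1⟩ ⟨p (j + 1), h2⟩ :=
  stmt0_general G d p hadj hdist hsimp j hj1 hj2 h1 h2
end

section
/- Let G be a connected graph with diameter d ≥ 2, let v be a non-simplicial vertex of G, and let G_v be the graph obtained from G by completing the neighborhood of v. Then for any two vertices α, β of G with d_G(α,β) = d, one has d_{G_v}(α,β) ≥ d − 1; in particular diam(G_v) ≥ diam(G) − 1. -/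
/-!
An edge of `G_v` is either an edge of `G` or joins two neighbours of `v`. Following a shortest
`α`–`β` path of `G_v`, as long as it uses only edges of `G` its length bounds `d_G`; once it uses
a new edge, it passes within distance one of `v` on both sides, so its length plus one bounds
`d_G(α, v) + d_G(v, β) ≥ d_G(α, β)`. Hence `d_G ≤ d_{G_v} + 1` for every pair of vertices.
-/

open SimpleGraph

namespace SimpleGraph

variable {V : Type} {G : SimpleGraph V}

lemma le_completeNeighborhood (v : V) : G ≤ completeNeighborhood G v :=
  fun _ _ ↦ Or.inl

lemma dist_le_length_or_dist_add_dist_le_length_add_one (v : V) {a b : V}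
    (W : (completeNeighborhood G v).Walk a b) :
    G.dist a b ≤ W.length ∨ G.dist a v + G.dist v b ≤ W.length + 1 := by
  induction W with
  | nil => exact Or.inl (by simp)
  | @cons a c b hac W ih =>
    rw [Walk.length_cons]
    rcases hac with hac | ⟨-, hva, hvc⟩
    · have hac₁ : G.dist a c ≤ 1 := (dist_eq_one_iff_adj.mpr hac).le
      rcases ih with ih | ih
      · have := hac.reachable.dist_triangle_left b
        exact Or.inl (by omega)
      · have := hac.reachable.dist_triangle_left v
        exact Or.inr (by omega)
    · have hav : G.dist a v ≤ 1 := (dist_eq_one_iff_adj.mpr hva.symm).le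
      have hvc₁ : G.dist v c ≤ 1 := (dist_eq_one_iff_adj.mpr hvc).le
      have := hvc.reachable.dist_triangle_left b
      right
      rcases ih with ih | ih <;> omega

lemma Preconnected.dist_le_dist_completeNeighborhood_add_one (hG : G.Preconnected) (v a b : V) :
    G.dist a b ≤ (completeNeighborhood G v).dist a b + 1 := by
  obtain ⟨W, hW⟩ := ((hG a b).mono (le_completeNeighborhood v)).exists_walk_length_eq_dist
  have := (hG a v).dist_triangle_left b
  rcases dist_le_length_or_dist_add_dist_le_length_add_one v W with h | h <;> omega

end SimpleGraph

theorem stmt2_general {V : Type} (G : SimpleGraph V)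
    (hconn : G.Connected) (d : ℕ) (hdiam : G.diam = d) (hd2 : 2 ≤ d)
    (v : V) :
    (∀ α β : V, G.dist α β = d → d - 1 ≤ (completeNeighborhood G v).dist α β) ∧
      d - 1 ≤ (completeNeighborhood G v).diam := by
  have hdist := hconn.preconnected.dist_le_dist_completeNeighborhood_add_one v
  have hpairs : ∀ α β : V, G.dist α β = d → d - 1 ≤ (completeNeighborhood G v).dist α β :=
    fun α β hαβ ↦ by have := hdist α β; omega
  refine ⟨hpairs, ?_⟩
  have : Nonempty V := hconn.nonempty
  obtain ⟨α, β, hαβ⟩ := G.exists_dist_eq_diam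
  have hfin : (completeNeighborhood G v).ediam ≠ ⊤ :=
    ne_top_of_le_ne_top (ediam_ne_top_of_diam_ne_zero (by omega))
      (ediam_anti (le_completeNeighborhood v))
  exact (hpairs α β (hαβ.trans hdiam)).trans (dist_le_diam hfin)

/-- completing the neighborhood of a non-simplicial vertex decreases
distances between diametral pairs, and hence the diameter, by at most one. -/
theorem stmt2 {V : Type} [Fintype V] [DecidableEq V] (G : SimpleGraph V)
    (hconn : G.Connected) (d : ℕ) (hdiam : G.diam = d) (hd2 : 2 ≤ d)
    (v : V) (hv : ¬ IsSimplicial G v) :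
    (∀ α β : V, G.dist α β = d → d - 1 ≤ (completeNeighborhood G v).dist α β) ∧
      d - 1 ≤ (completeNeighborhood G v).diam :=
  stmt2_general G hconn d hdiam hd2 v
end

section
/- Let G be a connected graph with diameter d ≥ 2 and let v be a non-simplicial vertex of G. Let G_v be obtained from G by completing the neighborhood of v. Then the graph G_v − v (deleting v from G_v) has a connected component of diameter at least d − 1; in particular d(G_v − v) ≥ diam(G) − 1, where d(H) denotes the sum over connected components H_i of H of diam(H_i) plus the number of isolated vertices of H. -/
open SimpleGraph

/-! Every edge added in `G_v` joins two neighbours of `v`, so it can be replaced by a detour of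
length two through `v`. Hence a walk of length `ℓ` from `a` to `b` in `G_v` gives
`dist_G(a, b) ≤ ℓ + 1`, and if it uses an added edge, even `dist_G(v, b) ≤ ℓ`. A diametral pair
of `G` avoiding `v` therefore stays at distance at least `d - 1` in `G_v - v`; if the pair
contains `v`, a neighbour of `v` takes its place. Finally `G_v - v` is connected: every vertex
reaches `N(v)` without passing through `v`, and `N(v)` is a clique in `G_v`. -/

section CompleteNeighborhood

variable {V : Type} {G : SimpleGraph V} {v : V}

lemma dist_le_length_or_of_walk_completeNeighborhood (hconn : G.Connected) {a b : V}
    (p : (completeNeighborhood G v).Walk a b) :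
    G.dist a b ≤ p.length ∨ (G.dist a b ≤ p.length + 1 ∧ G.dist v b ≤ p.length) := by
  induction p with
  | nil => exact Or.inl (by simp)
  | @cons a c b h p ih =>
    rw [Walk.length_cons]
    have hab := hconn.dist_triangle (u := a) (v := c) (w := b)
    rcases h with hac | ⟨-, hva, hvc⟩
    · have := dist_eq_one_iff_adj.mpr hac
      omega
    · have hav := dist_eq_one_iff_adj.mpr hva.symm
      have hvc := dist_eq_one_iff_adj.mpr hvc
      have hvb := hconn.dist_triangle (u := v) (v := c) (w := b)
      have hab' := hconn.dist_triangle (u := a) (v := v) (w := b)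
      omega

lemma exists_adj_reachable_deleteVert_completeNeighborhood {w : V} (h : G.Reachable w v)
    (hw : w ≠ v) :
    ∃ (u : V) (hu : G.Adj v u),
      (deleteVert (completeNeighborhood G v) v).Reachable ⟨w, hw⟩ ⟨u, hu.ne'⟩ := by
  rw [reachable_iff_reflTransGen] at h
  induction h using Relation.ReflTransGen.head_induction_on with
  | refl => exact absurd rfl hw
  | @head w c hwc _ ih =>
    by_cases hc : c = v
    · subst hc
      exact ⟨w, hwc.symm, .rfl⟩
    · obtain ⟨u, hu, hreach⟩ := ih hc
      exact ⟨u, hu, (Adj.reachable (Or.inl hwc)).trans hreach⟩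

lemma reachable_deleteVert_completeNeighborhood_of_adj {u u' : V} (hu : G.Adj v u)
    (hu' : G.Adj v u') :
    (deleteVert (completeNeighborhood G v) v).Reachable ⟨u, hu.ne'⟩ ⟨u', hu'.ne'⟩ := by
  by_cases h : u = u'
  · subst h
    rfl
  · exact Adj.reachable (Or.inr ⟨h, hu, hu'⟩)

lemma preconnected_deleteVert_completeNeighborhood (hconn : G.Preconnected) :
    (deleteVert (completeNeighborhood G v) v).Preconnected := by
  rintro ⟨a, ha⟩ ⟨b, hb⟩
  obtain ⟨u, hu, hau⟩ := exists_adj_reachable_deleteVert_completeNeighborhood (hconn a v) ha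
  obtain ⟨u', hu', hbu'⟩ := exists_adj_reachable_deleteVert_completeNeighborhood (hconn b v) hb
  exact hau.trans ((reachable_deleteVert_completeNeighborhood_of_adj hu hu').trans hbu'.symm)

lemma exists_ne_forall_walk_completeNeighborhood_length_ge [Finite V] (hconn : G.Connected)
    (hd : 1 ≤ G.diam) :
    ∃ a b, a ≠ v ∧ b ≠ v ∧
      ∀ p : (completeNeighborhood G v).Walk a b, G.diam - 1 ≤ p.length := by
  have := nontrivial_of_diam_ne_zero (G := G) (by omega)
  obtain ⟨x, y, hxy⟩ := G.exists_dist_eq_diam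
  wlog hy : y ≠ v generalizing x y
  · refine this y x (by rwa [dist_comm]) fun hx => ?_
    rw [not_not] at hy
    rw [hx, hy, dist_self] at hxy
    omega
  by_cases hx : x = v
  · subst hx
    obtain ⟨u, hu⟩ := hconn.preconnected.exists_adj_of_nontrivial x
    have hxu := dist_eq_one_iff_adj.mpr hu
    have hxy' := hconn.dist_triangle (u := x) (v := u) (w := y)
    refine ⟨u, y, hu.ne', hy, fun p => ?_⟩
    have := dist_le_length_or_of_walk_completeNeighborhood hconn p
    omega
  · refine ⟨x, y, hx, hy, fun p => ?_⟩
    have := dist_le_length_or_of_walk_completeNeighborhood hconn p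
    omega

end CompleteNeighborhood

lemma le_diam_of_forall_le_length {W : Type*} [Finite W] {K : SimpleGraph W} (hK : K.Connected)
    {a b : W} {n : ℕ} (h : ∀ p : K.Walk a b, n ≤ p.length) : n ≤ K.diam := by
  have := hK.nonempty
  obtain ⟨p, hp⟩ := hK.exists_walk_length_eq_dist a b
  calc n ≤ K.dist a b := hp ▸ h p
    _ ≤ K.diam := dist_le_diam ((connected_iff_ediam_ne_top).mp hK)

lemma diam_induce_supp_le_dval {V : Type} [Finite V] (K : SimpleGraph V)
    (c : K.ConnectedComponent) : (K.induce c.supp).diam ≤ dval K :=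
  (single_le_finsum (f := fun c : K.ConnectedComponent => (K.induce c.supp).diam) c
    (Set.toFinite _) fun _ => Nat.zero_le _).trans (Nat.le_add_left _ _)

theorem stmt3_general {V : Type} [Fintype V] (G : SimpleGraph V)
    (hconn : G.Connected) (d : ℕ) (hdiam : G.diam = d) (hd2 : 2 ≤ d)
    (v : V) :
    (∃ c : (deleteVert (completeNeighborhood G v) v).ConnectedComponent,
        d - 1 ≤ ((deleteVert (completeNeighborhood G v) v).induce c.supp).diam) ∧
      d - 1 ≤ dval (deleteVert (completeNeighborhood G v) v) := by
  subst hdiam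
  obtain ⟨a, b, hav, hbv, hfar⟩ :=
    exists_ne_forall_walk_completeNeighborhood_length_ge (v := v) hconn (by omega)
  set H := deleteVert (completeNeighborhood G v) v
  let c := H.connectedComponentMk ⟨a, hav⟩
  have hb : ⟨b, hbv⟩ ∈ c.supp :=
    ConnectedComponent.sound (preconnected_deleteVert_completeNeighborhood hconn.preconnected _ _)
  have hc : G.diam - 1 ≤ (H.induce c.supp).diam := by
    refine le_diam_of_forall_le_length c.connected_toSimpleGraph
      (a := ⟨⟨a, hav⟩, rfl⟩) (b := ⟨⟨b, hbv⟩, hb⟩) fun p => ?_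
    calc G.diam - 1
        ≤ (p.map ((Embedding.induce _).toHom.comp (Embedding.induce c.supp).toHom)).length :=
          hfar _
      _ = p.length := Walk.length_map _ _
  exact ⟨⟨c, hc⟩, hc.trans (diam_induce_supp_le_dval H c)⟩

/-- for a non-simplicial vertex `v` of a connected graph `G` of diameter
`d ≥ 2`, the graph `G_v - v` has a connected component of diameter at least `d - 1`;
in particular `d(G_v - v) ≥ d - 1`. -/
theorem stmt3 {V : Type} [Fintype V] [DecidableEq V] (G : SimpleGraph V)
    (hconn : G.Connected) (d : ℕ) (hdiam : G.diam = d) (hd2 : 2 ≤ d)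
    (v : V) (hv : ¬ IsSimplicial G v) :
    (∃ c : (deleteVert (completeNeighborhood G v) v).ConnectedComponent,
        d - 1 ≤ ((deleteVert (completeNeighborhood G v) v).induce c.supp).diam) ∧
      d - 1 ≤ dval (deleteVert (completeNeighborhood G v) v) :=
  stmt3_general G hconn d hdiam hd2 v
end

section
/- Let G be a connected graph, let P: v_1,...,v_{d+1} be a shortest path realizing the diameter d of G, and suppose every vertex not on P is simplicial and every non-simplicial vertex lies on P. If for some 2 ≤ j ≤ d a vertex n_j ∉ V(P) satisfies {n_j, v_j} ∈ E(G) and {n_j, v_{j+1}} ∈ E(G), then d_{G − v_j}(n_j, v_{d+1}) = d − j + 1. -/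
open SimpleGraph

/-!
Following `P` from `v_{j+1}` gives a walk of length `d - j + 1` from `n_j` to `v_{d+1}` that
avoids `v_j`. Conversely, the first step of a walk from `n_j` in `G - v_j` lands on a neighbour
of `n_j`, which is adjacent to `v_j` because `n_j` is simplicial; so such a walk is at least as
long as `d_G(v_j, v_{d+1})`, which is `d - j + 1` since `P` is a shortest path.
-/

namespace SimpleGraph

variable {V : Type} {G : SimpleGraph V} {p : ℕ → V}

theorem exists_walk_of_adj_succ {i j : ℕ} (hij : i ≤ j)
    (hadj : ∀ l, i ≤ l → l < j → G.Adj (p l) (p (l + 1))) :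
    ∃ w : G.Walk (p i) (p j), w.length = j - i ∧ ∀ v ∈ w.support, ∃ l, i ≤ l ∧ l ≤ j ∧ p l = v := by
  induction j, hij using Nat.le_induction with
  | base =>
    refine ⟨.nil, by simp, fun v hv => ⟨i, le_rfl, le_rfl, ?_⟩⟩
    rw [Walk.support_nil, List.mem_singleton] at hv
    exact hv.symm
  | succ j hij ih =>
    obtain ⟨w, hlen, hsupp⟩ := ih fun l hil hlj => hadj l hil (by omega)
    refine ⟨w.concat (hadj j hij (by omega)), by simp [hlen]; omega, ?_⟩
    intro v hv
    rw [Walk.support_concat, List.mem_append, List.mem_singleton] at hv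
    rcases hv with hv | rfl
    · obtain ⟨l, hil, hlj, rfl⟩ := hsupp v hv
      exact ⟨l, hil, by omega, rfl⟩
    · exact ⟨j + 1, by omega, le_rfl, rfl⟩

theorem dist_eq_sub_of_geodesic {d k : ℕ} (hadj : ∀ l < d, G.Adj (p l) (p (l + 1)))
    (hdist : G.dist (p 0) (p d) = d) (hk : k ≤ d) :
    G.dist (p k) (p d) = d - k := by
  obtain ⟨w₁, hw₁, -⟩ := exists_walk_of_adj_succ (p := p) (Nat.zero_le k)
    fun l _ hl => hadj l (by omega)
  obtain ⟨w₂, hw₂, -⟩ := exists_walk_of_adj_succ (p := p) hk fun l _ hl => hadj l hl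
  have htri := w₁.reachable.dist_triangle_left (p d)
  have h₁ := dist_le w₁
  have h₂ := dist_le w₂
  omega

theorem apply_ne_of_lt_of_geodesic {d k i : ℕ} (hadj : ∀ l < d, G.Adj (p l) (p (l + 1)))
    (hdist : G.dist (p 0) (p d) = d) (hki : k < i) (hid : i ≤ d) : p i ≠ p k := by
  intro h
  have hi := dist_eq_sub_of_geodesic hadj hdist hid
  have hk := dist_eq_sub_of_geodesic hadj hdist (k := k) (by omega)
  rw [h] at hi
  omega

theorem dist_induce_le_length {s : Set V} {u v : V} (w : G.Walk u v)
    (hw : ∀ b ∈ w.support, b ∈ s) :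
    (G.induce s).dist ⟨u, hw _ w.start_mem_support⟩ ⟨v, hw _ w.end_mem_support⟩ ≤ w.length :=
  calc _ ≤ (w.induce s hw).length := dist_le _
    _ = w.length := by rw [← Walk.length_map (Embedding.induce s).toHom, Walk.map_induce]; rfl

theorem IsSimplicial.dist_le_dist_deleteVert {a x y : V} (hx : IsSimplicial G x)
    (hxa : G.Adj x a) (hxy : x ≠ y) (hxa' : x ∈ ({a}ᶜ : Set V)) (hya : y ∈ ({a}ᶜ : Set V))
    (hr : (deleteVert G a).Reachable ⟨x, hxa'⟩ ⟨y, hya⟩) :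
    G.dist a y ≤ (deleteVert G a).dist ⟨x, hxa'⟩ ⟨y, hya⟩ := by
  obtain ⟨w, hw⟩ := hr.exists_walk_length_eq_dist
  rw [← hw]
  cases w with
  | nil => exact absurd rfl hxy
  | @cons _ b _ hxb w' =>
    have hab : G.Adj a b := hx hxa (induce_adj.1 hxb) fun h => b.2 h.symm
    calc G.dist a y ≤ (Walk.cons hab (w'.map (Embedding.induce _).toHom)).length := dist_le _
      _ = w'.length + 1 := congrArg (· + 1) (Walk.length_map _ w')

end SimpleGraph

/-- `p i` is the paper's `v_{i+1}`, so `k = j - 1` and `d - k = d - j + 1`. -/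
theorem stmt6_general {V : Type} (G : SimpleGraph V)
    (d : ℕ)
    (p : ℕ → V)
    (hadj : ∀ i < d, G.Adj (p i) (p (i + 1)))
    (hdist : G.dist (p 0) (p d) = d)
    (hsimp : ∀ x : V, (∀ i ≤ d, x ≠ p i) → IsSimplicial G x)
    (k : ℕ) (hk2 : k + 1 ≤ d)
    (x : V) (hx : ∀ i ≤ d, x ≠ p i)
    (hxk : G.Adj x (p k)) (hxk1 : G.Adj x (p (k + 1)))
    (hmem1 : x ∈ ({p k}ᶜ : Set V)) (hmem2 : p d ∈ ({p k}ᶜ : Set V)) :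
    (deleteVert G (p k)).dist ⟨x, hmem1⟩ ⟨p d, hmem2⟩ = d - k := by
  obtain ⟨w, hlen, hsupp⟩ := exists_walk_of_adj_succ (p := p) hk2 fun l _ hl => hadj l hl
  have hW : ∀ b ∈ (w.cons hxk1).support, b ∈ ({p k}ᶜ : Set V) := by
    rintro b hb rfl
    rw [Walk.support_cons, List.mem_cons] at hb
    rcases hb with hb | hb
    · exact hx k (by omega) hb.symm
    · obtain ⟨l, hkl, hld, hl⟩ := hsupp _ hb
      exact apply_ne_of_lt_of_geodesic hadj hdist (by omega) hld hl
  have hupper : (deleteVert G (p k)).dist ⟨x, hmem1⟩ ⟨p d, hmem2⟩ ≤ (w.cons hxk1).length :=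
    dist_induce_le_length _ hW
  have hlower := (hsimp x hx).dist_le_dist_deleteVert hxk (hx d le_rfl) hmem1 hmem2
    ⟨(w.cons hxk1).induce _ hW⟩
  rw [dist_eq_sub_of_geodesic hadj hdist (by omega)] at hlower
  simp only [Walk.length_cons] at hupper
  omega

/-- with `P : p 0, …, p d` an induced shortest path realizing the
diameter `d` (so `v_k = p (k-1)`), and every vertex off `P` simplicial, if a vertex
`x ∉ V(P)` is adjacent to `p k` and `p (k+1)` (i.e. to `v_j` and `v_{j+1}` with
`j = k + 1`, `2 ≤ j ≤ d`), then `d_{G - v_j}(x, v_{d+1}) = d - j + 1 = d - k`. -/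
theorem stmt6 {V : Type} [Fintype V] [DecidableEq V] (G : SimpleGraph V)
    (hconn : G.Connected) (d : ℕ) (hdiam : G.diam = d)
    (p : ℕ → V)
    (hadj : ∀ i < d, G.Adj (p i) (p (i + 1)))
    (hinj : ∀ i ≤ d, ∀ j ≤ d, p i = p j → i = j)
    (hdist : G.dist (p 0) (p d) = d)
    (hsimp : ∀ x : V, (∀ i ≤ d, x ≠ p i) → IsSimplicial G x)
    (k : ℕ) (hk1 : 1 ≤ k) (hk2 : k + 1 ≤ d)
    (x : V) (hx : ∀ i ≤ d, x ≠ p i)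
    (hxk : G.Adj x (p k)) (hxk1 : G.Adj x (p (k + 1)))
    (hmem1 : x ∈ ({p k}ᶜ : Set V)) (hmem2 : p d ∈ ({p k}ᶜ : Set V)) :
    (deleteVert G (p k)).dist ⟨x, hmem1⟩ ⟨p d, hmem2⟩ = d - k :=
  stmt6_general G d p hadj hdist hsimp k hk2 x hx hxk hxk1 hmem1 hmem2
end

section
/- Let G be a graph on [n] with n ≥ 4. Suppose there exists T' ∈ C(G) with |T'| = n − 3 and such that G − T' has exactly 2 connected components. Then either G ∈ G_T for some T ⊆ [n] with |T| = n − 2, or G = H ∗ (K_1 ∪̇ K_2) for some graph H on n − 3 vertices. -/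
open SimpleGraph

/-- The number of connected components of the induced subgraph `G - S`. -/
noncomputable def numComponents {V : Type} (G : SimpleGraph V) (S : Set V) : ℕ :=
  Nat.card ((G.induce Sᶜ).ConnectedComponent)

/-- `U` has the cut point property for `G` if every `v ∈ U` is a cut vertex of
`G - (U \ {v})`, i.e. deleting `v` from `G - (U \ {v})` increases the number of
connected components. -/
def HasCutPointProperty {V : Type} (G : SimpleGraph V) (U : Set V) : Prop :=
  ∀ v ∈ U, numComponents G (U \ {v}) < numComponents G U

/-- `G` belongs to the family `𝒢_T`. -/
def InGTFamily {n : ℕ} (G : SimpleGraph (Fin n)) (T : Set (Fin n)) : Prop :=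
  ∃ u w : Fin n, u ≠ w ∧ ¬ G.Adj u w ∧ u ∉ T ∧ w ∉ T ∧
    ∃ V0 V1 V2 : Set (Fin n),
      Disjoint V0 V1 ∧ Disjoint V0 V2 ∧ Disjoint V1 V2 ∧
      V1.Nonempty ∧ V2.Nonempty ∧ V0 ∪ V1 ∪ V2 = T ∧
      G.neighborSet u = V0 ∪ V1 ∧ G.neighborSet w = V0 ∪ V2 ∧
      ∀ a ∈ V1, ∀ b ∈ V2, G.Adj a b

/-! Removing `T'` leaves three vertices and two components: an isolated vertex `a` and an edge
`bc`. For `v ∈ T'` the cut point property makes `G - (T' \ {v})`, the graph on `{v, a, b, c}`,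
connected, so `v` is adjacent to `a` and to `b` or `c`. If every such `v` sees both `b` and `c`,
then `G = (G - {a, b, c}) ∗ (K₁ ∪̇ K₂)`. Otherwise some `v` misses, say, `c`; then `u = a`, `w = c`
exhibit `G ∈ 𝒢_T` for `T = [n] \ {a, c}`, since `b` is the only neighbour of `c` outside `N(a)`. -/

namespace SimpleGraph

variable {V : Type*} {G : SimpleGraph V}

theorem exists_adj_of_induce_preconnected {S K : Set V} (h : (G.induce S).Preconnected)
    {x y : V} (hx : x ∈ S) (hy : y ∈ S) (hxK : x ∈ K) (hyK : y ∉ K) :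
    ∃ p ∈ K, ∃ q ∈ S, q ∉ K ∧ G.Adj p q := by
  obtain ⟨w⟩ := h ⟨x, hx⟩ ⟨y, hy⟩
  obtain ⟨d, -, hd₁, hd₂⟩ := w.exists_boundary_dart (Subtype.val ⁻¹' K) hxK hyK
  exact ⟨d.fst, hd₁, d.snd, d.snd.2, hd₂, d.adj⟩

theorem exists_isolated_and_edge_of_card_eq_three [Finite V] (h3 : Nat.card V = 3)
    (h2 : Nat.card G.ConnectedComponent = 2) :
    ∃ a b c : V, a ≠ b ∧ a ≠ c ∧ b ≠ c ∧ (Set.univ : Set V) = {a, b, c} ∧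
      G.Adj b c ∧ ¬ G.Adj a b ∧ ¬ G.Adj a c := by
  have hni : ¬ Function.Injective G.connectedComponentMk := fun hinj => by
    have := Nat.card_le_card_of_injective _ hinj
    omega
  obtain ⟨b, c, hsame, hne⟩ := Function.not_injective_iff.mp hni
  obtain ⟨a, ha⟩ : ∃ a, G.connectedComponentMk a ≠ G.connectedComponentMk b := by
    by_contra! h
    have : Subsingleton G.ConnectedComponent :=
      ⟨ConnectedComponent.ind₂ fun x y => (h x).trans (h y).symm⟩
    have := Finite.card_le_one_iff_subsingleton.mpr this
    omega
  have hab : a ≠ b := by rintro rfl; exact ha rfl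
  have hac : a ≠ c := by rintro rfl; exact ha hsame.symm
  have hnab : ¬ G.Adj a b := fun h => ha (ConnectedComponent.sound h.reachable)
  have hnac : ¬ G.Adj a c := fun h => ha ((ConnectedComponent.sound h.reachable).trans hsame.symm)
  have huniv : (Set.univ : Set V) = {a, b, c} := by
    refine (Set.eq_of_subset_of_ncard_le (Set.subset_univ _) ?_).symm
    rw [Set.ncard_univ, h3, Set.ncard_insert_of_notMem (by simp [hab, hac]), Set.ncard_pair hne]
  obtain ⟨w⟩ := ConnectedComponent.exact hsame
  obtain ⟨d, -, hd₁, hd₂⟩ := w.exists_boundary_dart {b} rfl hne.symm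
  rw [Set.mem_singleton_iff] at hd₁ hd₂
  have hda : d.snd ≠ a := fun h =>
    ha (h ▸ hd₁ ▸ (ConnectedComponent.sound d.adj.reachable).symm)
  have hdc : d.snd = c := by
    have := huniv ▸ Set.mem_univ d.snd
    simp only [Set.mem_insert_iff, Set.mem_singleton_iff] at this
    tauto
  exact ⟨a, b, c, hab, hac, hne, huniv, hd₁ ▸ hdc ▸ d.adj, hnab, hnac⟩

end SimpleGraph

open SimpleGraph

theorem induce_compl_preconnected_of_numComponents_lt_two {V : Type} [Finite V]
    {G : SimpleGraph V} {S : Set V} (h : numComponents G S < 2) :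
    (G.induce Sᶜ).Preconnected := by
  have : Subsingleton (G.induce Sᶜ).ConnectedComponent :=
    Finite.card_le_one_iff_subsingleton.mp (Nat.lt_succ_iff.mp h)
  exact fun x y => ConnectedComponent.exact (Subsingleton.elim _ _)

theorem exists_isolated_and_edge_of_ncard_compl_eq_three {V : Type} [Finite V]
    {G : SimpleGraph V} {S : Set V} (h3 : Sᶜ.ncard = 3) (h2 : numComponents G S = 2) :
    ∃ a b c : V, a ≠ b ∧ a ≠ c ∧ b ≠ c ∧ Sᶜ = {a, b, c} ∧
      G.Adj b c ∧ ¬ G.Adj a b ∧ ¬ G.Adj a c := by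
  obtain ⟨a, b, c, hab, hac, hbc, huniv, hadj, hnab, hnac⟩ :=
    exists_isolated_and_edge_of_card_eq_three (G := G.induce Sᶜ)
      (by rwa [Nat.card_coe_set_eq]) h2
  refine ⟨a, b, c, Subtype.coe_ne_coe.mpr hab, Subtype.coe_ne_coe.mpr hac,
    Subtype.coe_ne_coe.mpr hbc, ?_, hadj, hnab, hnac⟩
  have := congrArg (Set.image Subtype.val) huniv
  rwa [Set.image_univ, Subtype.range_coe, Set.image_insert_eq, Set.image_insert_eq,
    Set.image_singleton] at this

theorem adj_of_induce_insert_preconnected {V : Type} {G : SimpleGraph V} {a b c v : V}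
    (hconn : (G.induce {v, a, b, c}).Preconnected) (hva : v ≠ a) (hab : a ≠ b) (hac : a ≠ c)
    (hnab : ¬ G.Adj a b) (hnac : ¬ G.Adj a c) :
    G.Adj a v ∧ (G.Adj b v ∨ G.Adj c v) := by
  constructor
  · obtain ⟨p, rfl, q, hq, hqa, hpq⟩ := exists_adj_of_induce_preconnected (K := {a}) hconn
      (x := a) (y := v) (by simp) (by simp) rfl hva
    simp only [Set.mem_insert_iff, Set.mem_singleton_iff] at hq hqa
    rcases hq with rfl | rfl | rfl | rfl <;> tauto
  · obtain ⟨p, hp, q, hq, hqK, hpq⟩ := exists_adj_of_induce_preconnected (K := {b, c}) hconn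
      (x := b) (y := a) (by simp) (by simp) (by simp) (by simp [hab, hac])
    simp only [Set.mem_insert_iff, Set.mem_singleton_iff] at hp hq hqK
    rcases hq with rfl | rfl | rfl | rfl <;> rcases hp with rfl | rfl <;> tauto

theorem ncard_compl_pair {n : ℕ} {u w : Fin n} (h : u ≠ w) :
    ({u, w}ᶜ : Set (Fin n)).ncard = n - 2 := by
  rw [Set.ncard_compl, Set.ncard_pair h, Nat.card_eq_fintype_card, Fintype.card_fin]

theorem inGTFamily_compl_pair {n : ℕ} {G : SimpleGraph (Fin n)} {u w : Fin n} (huw : u ≠ w)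
    (hnuw : ¬ G.Adj u w) (hcover : ∀ x, x ≠ u → x ≠ w → G.Adj u x ∨ G.Adj w x)
    (hu : ∃ x, G.Adj u x ∧ ¬ G.Adj w x) (hw : ∃ x, G.Adj w x ∧ ¬ G.Adj u x)
    (hcomplete : ∀ p q, G.Adj u p → ¬ G.Adj w p → G.Adj w q → ¬ G.Adj u q → G.Adj p q) :
    InGTFamily G {u, w}ᶜ := by
  refine ⟨u, w, huw, hnuw, by simp, by simp, G.neighborSet u ∩ G.neighborSet w,
    G.neighborSet u \ G.neighborSet w, G.neighborSet w \ G.neighborSet u,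
    Set.disjoint_sdiff_inter.symm, ?_, disjoint_sdiff_sdiff, hu, hw, ?_,
    (Set.inter_union_sdiff _ _).symm, by rw [Set.inter_comm, Set.inter_union_sdiff],
    fun p hp q hq => hcomplete p q hp.1 hp.2 hq.1 hq.2⟩
  · rw [Set.inter_comm]
    exact Set.disjoint_sdiff_inter.symm
  · ext x
    simp only [Set.mem_union, Set.mem_inter_iff, Set.mem_sdiff, mem_neighborSet,
      Set.mem_compl_iff, Set.mem_insert_iff, Set.mem_singleton_iff]
    constructor
    · rintro ((⟨h, -⟩ | ⟨h, -⟩) | ⟨h, -⟩) <;> rintro (rfl | rfl)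
      all_goals first | exact G.irrefl h | exact hnuw h | exact hnuw h.symm
    · intro hx
      push Not at hx
      have := hcover x hx.1 hx.2
      tauto

theorem inGTFamily_compl_pair_of_not_adj {n : ℕ} {G : SimpleGraph (Fin n)} {a b c v : Fin n}
    (hbc : G.Adj b c) (hnab : ¬ G.Adj a b) (hnac : ¬ G.Adj a c)
    (hkey : ∀ x, x ≠ a → x ≠ b → x ≠ c → G.Adj a x ∧ (G.Adj b x ∨ G.Adj c x))
    (hav : G.Adj a v) (hcv : ¬ G.Adj c v) :
    InGTFamily G {a, c}ᶜ := by
  refine inGTFamily_compl_pair (fun h => hnab (h ▸ hbc.symm)) hnac (fun x hxa hxc => ?_)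
    ⟨v, hav, hcv⟩ ⟨b, hbc.symm, hnab⟩ (fun p q hap hcp hcq haq => ?_)
  · by_cases hxb : x = b
    · exact Or.inr (hxb ▸ hbc.symm)
    · exact Or.inl (hkey x hxa hxb hxc).1
  · have hqb : q = b := by
      by_contra hqb
      refine haq (hkey q ?_ hqb ?_).1
      · rintro rfl; exact hnac hcq.symm
      · rintro rfl; exact G.irrefl hcq
    have hpa : p ≠ a := by rintro rfl; exact G.irrefl hap
    have hpb : p ≠ b := by rintro rfl; exact hnab hap
    have hpc : p ≠ c := by rintro rfl; exact hnac hap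
    rw [hqb]
    exact ((hkey p hpa hpb hpc).2.resolve_right hcp).symm

/-- if some `T' ∈ 𝒞(G)` with `|T'| = n - 3` leaves exactly two
connected components, then either `G ∈ 𝒢_T` for some `T` with `|T| = n - 2`, or
`G = H ∗ (K₁ ∪̇ K₂)` for some graph `H` on `n - 3` vertices. -/
theorem stmt14 {n : ℕ} (hn : 4 ≤ n) (G : SimpleGraph (Fin n))
    (T' : Set (Fin n)) (hcpp : HasCutPointProperty G T')
    (hcard : T'.ncard = n - 3) (hcomp : numComponents G T' = 2) :
    (∃ T : Set (Fin n), T.ncard = n - 2 ∧ InGTFamily G T) ∨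
      (∃ a b c : Fin n, a ≠ b ∧ a ≠ c ∧ b ≠ c ∧
        G.Adj b c ∧ ¬ G.Adj a b ∧ ¬ G.Adj a c ∧
        ∀ x : Fin n, x ≠ a → x ≠ b → x ≠ c →
          G.Adj x a ∧ G.Adj x b ∧ G.Adj x c) := by
  have h3 : T'ᶜ.ncard = 3 := by
    rw [Set.ncard_compl, hcard, Nat.card_eq_fintype_card, Fintype.card_fin]
    omega
  obtain ⟨a, b, c, hab, hac, hbc, hT', hadj, hnab, hnac⟩ :=
    exists_isolated_and_edge_of_ncard_compl_eq_three h3 hcomp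
  obtain rfl : T' = {a, b, c}ᶜ := by rw [← hT', compl_compl]
  have hkey : ∀ x, x ≠ a → x ≠ b → x ≠ c → G.Adj a x ∧ (G.Adj b x ∨ G.Adj c x) := by
    intro x hxa hxb hxc
    have hconn := induce_compl_preconnected_of_numComponents_lt_two
      (hcomp ▸ hcpp x (by simp [hxa, hxb, hxc]))
    rw [Set.compl_sdiff, compl_compl, Set.union_comm, Set.union_singleton] at hconn
    exact adj_of_induce_insert_preconnected hconn hxa hab hac hnab hnac
  by_cases hall : ∀ x, x ≠ a → x ≠ b → x ≠ c → G.Adj b x ∧ G.Adj c x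
  · refine Or.inr ⟨a, b, c, hab, hac, hbc, hadj, hnab, hnac, fun x hxa hxb hxc => ?_⟩
    exact ⟨(hkey x hxa hxb hxc).1.symm, (hall x hxa hxb hxc).1.symm,
      (hall x hxa hxb hxc).2.symm⟩
  push Not at hall
  obtain ⟨v, hva, hvb, hvc, hv⟩ := hall
  by_cases hcv : G.Adj c v
  · have hkey' : ∀ x, x ≠ a → x ≠ c → x ≠ b → G.Adj a x ∧ (G.Adj c x ∨ G.Adj b x) :=
      fun x hxa hxc hxb => (hkey x hxa hxb hxc).imp_right Or.symm
    exact Or.inl ⟨_, ncard_compl_pair hab,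
      inGTFamily_compl_pair_of_not_adj hadj.symm hnac hnab hkey' (hkey v hva hvb hvc).1
        fun hbv => hv hbv hcv⟩
  · exact Or.inl ⟨_, ncard_compl_pair hac,
      inGTFamily_compl_pair_of_not_adj hadj hnab hnac hkey (hkey v hva hvb hvc).1 hcv⟩
end
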